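/- arXiv:2305.01396 — 3 statements merged into one kernel-verified Lean document; each statement's English description precedes it below -/
import Mathlib

section
/- Let R be an algebraic curvature tensor on an n-dimensional inner product space with n ≥ 4 satisfying the PIC1 condition: for every orthonormal four-frame {e₁,e₂,e₃,e₄} and every λ ∈ [0,1], R₁₃₃₁ + λ²R₁₄₄₁ + R₂₃₃₂ + λ²R₂₄₄₂ + 2λR₁₂₃₄ ≥ 0. Then the Ricci curvature of R satisfies Ric(R) ≤ (1/2)·scal(R)·g, i.e., every eigenvalue of the Ricci tensor is at most half the scalar curvature. -/
open scoped RealInnerProductSpace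

lemma trace_inv {n : ℕ} (B : EuclideanSpace ℝ (Fin n) →ₗ[ℝ] EuclideanSpace ℝ (Fin n) →ₗ[ℝ] ℝ)
    (b : OrthonormalBasis (Fin n) ℝ (EuclideanSpace ℝ (Fin n))) :
    ∑ i, B (EuclideanSpace.single i 1) (EuclideanSpace.single i 1) = ∑ i, B (b i) (b i) := by
  have expand : ∀ x y : EuclideanSpace ℝ (Fin n),
      B x y = ∑ k, ∑ l, ⟪b k, x⟫ * ⟪b l, y⟫ * B (b k) (b l) := by
    intro x y
    conv_lhs => rw [← b.sum_repr' x, ← b.sum_repr' y]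
    simp only [map_sum, map_smul, LinearMap.sum_apply, LinearMap.smul_apply, smul_eq_mul,
      Finset.mul_sum]
    rw [Finset.sum_comm]
    exact Finset.sum_congr rfl fun k _ => Finset.sum_congr rfl fun l _ => by ring
  have key : ∀ k l : Fin n,
      ∑ i, ⟪b k, EuclideanSpace.single i (1:ℝ)⟫ * ⟪b l, EuclideanSpace.single i (1:ℝ)⟫
        = if k = l then (1:ℝ) else 0 := by
    intro k l
    rw [← orthonormal_iff_ite.mp b.orthonormal k l]
    rw [PiLp.inner_apply]
    refine Finset.sum_congr rfl fun i _ => ?_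
    simp [EuclideanSpace.inner_single_right, mul_comm]
  calc ∑ i, B (EuclideanSpace.single i 1) (EuclideanSpace.single i 1)
      = ∑ i, ∑ k, ∑ l, ⟪b k, EuclideanSpace.single i (1:ℝ)⟫ *
          ⟪b l, EuclideanSpace.single i (1:ℝ)⟫ * B (b k) (b l) :=
        Finset.sum_congr rfl fun i _ => expand _ _
    _ = ∑ k, ∑ l, (∑ i, ⟪b k, EuclideanSpace.single i (1:ℝ)⟫ *
          ⟪b l, EuclideanSpace.single i (1:ℝ)⟫) * B (b k) (b l) := by
        rw [Finset.sum_comm]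
        refine Finset.sum_congr rfl fun k _ => ?_
        rw [Finset.sum_comm]
        refine Finset.sum_congr rfl fun l _ => ?_
        rw [Finset.sum_mul]
    _ = ∑ k, ∑ l, (if k = l then (1:ℝ) else 0) * B (b k) (b l) := by
        simp_rw [key]
    _ = ∑ k, B (b k) (b k) := by
        refine Finset.sum_congr rfl fun k _ => ?_
        simp

set_option maxHeartbeats 2000000 in
/-- An algebraic curvature tensor (with the symmetries of a Riemann curvature tensor)
on `ℝⁿ`, `n ≥ 4`, satisfying the PIC1 condition has `Ric ≤ (1/2) scal · g`,
i.e. `Ric(v,v) ≤ (1/2) scal` for every unit vector `v`. -/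
theorem stmt_0 (n : ℕ) (hn : 4 ≤ n)
    (R : EuclideanSpace ℝ (Fin n) →ₗ[ℝ] EuclideanSpace ℝ (Fin n) →ₗ[ℝ]
      EuclideanSpace ℝ (Fin n) →ₗ[ℝ] EuclideanSpace ℝ (Fin n) →ₗ[ℝ] ℝ)
    (hanti1 : ∀ x y z w, R x y z w = - R y x z w)
    (hanti2 : ∀ x y z w, R x y z w = - R x y w z)
    (hpair : ∀ x y z w, R x y z w = R z w x y)
    (hbianchi : ∀ x y z w, R x y z w + R y z x w + R z x y w = 0)
    (hPIC1 : ∀ e : Fin 4 → EuclideanSpace ℝ (Fin n),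
      (∀ i j, ⟪e i, e j⟫ = if i = j then (1 : ℝ) else 0) →
      ∀ l : ℝ, l ∈ Set.Icc (0 : ℝ) 1 →
      0 ≤ R (e 0) (e 2) (e 2) (e 0) + l ^ 2 * R (e 0) (e 3) (e 3) (e 0)
        + R (e 1) (e 2) (e 2) (e 1) + l ^ 2 * R (e 1) (e 3) (e 3) (e 1)
        + 2 * l * R (e 0) (e 1) (e 2) (e 3)) :
    ∀ v : EuclideanSpace ℝ (Fin n), ‖v‖ = 1 →
      (∑ i, R v (EuclideanSpace.single i 1) (EuclideanSpace.single i 1) v)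
        ≤ (1 / 2) * ∑ i, ∑ j, R (EuclideanSpace.single i 1) (EuclideanSpace.single j 1)
            (EuclideanSpace.single j 1) (EuclideanSpace.single i 1) := by
  intro v hv
  haveI : NeZero n := ⟨by omega⟩
  -- extend v to an orthonormal basis b with b 0 = v
  have hvon : Orthonormal ℝ (({0} : Set (Fin n)).restrict (fun _ : Fin n => v)) := by
    rw [orthonormal_iff_ite]
    intro i j
    have : i = j := Subsingleton.elim i j
    subst this
    rw [if_pos rfl]
    show ⟪v, v⟫ = 1
    rw [real_inner_self_eq_norm_sq, hv]
    norm_num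
  obtain ⟨b, hb⟩ := hvon.exists_orthonormalBasis_extension_of_card_eq
    (by simp [finrank_euclideanSpace]) (s := ({0} : Set (Fin n)))
  have hb0 : b 0 = v := hb 0 rfl
  -- bilinear maps for trace invariance
  set B1 : EuclideanSpace ℝ (Fin n) →ₗ[ℝ] EuclideanSpace ℝ (Fin n) →ₗ[ℝ] ℝ :=
    LinearMap.mk₂ ℝ (fun x y => R v x y v)
      (by intros; simp) (by intros; simp) (by intros; simp) (by intros; simp) with hB1
  have hRic : ∑ i, R v (EuclideanSpace.single i 1) (EuclideanSpace.single i 1) v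
      = ∑ i, R v (b i) (b i) v := by
    have := trace_inv B1 b
    simpa [hB1] using this
  have h3 : ∀ a d : EuclideanSpace ℝ (Fin n),
      ∑ j, R a (EuclideanSpace.single j 1) (EuclideanSpace.single j 1) d
        = ∑ j, R a (b j) (b j) d := by
    intro a d
    have := trace_inv (LinearMap.mk₂ ℝ (fun x y => R a x y d)
      (by intros; simp) (by intros; simp) (by intros; simp) (by intros; simp)) b
    simpa using this
  have h2 : ∀ c : EuclideanSpace ℝ (Fin n),
      ∑ i, R (EuclideanSpace.single i 1) c c (EuclideanSpace.single i 1)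
        = ∑ i, R (b i) c c (b i) := by
    intro c
    have := trace_inv (LinearMap.mk₂ ℝ (fun x y => R x c c y)
      (by intros; simp) (by intros; simp) (by intros; simp) (by intros; simp)) b
    simpa using this
  have hScal : ∑ i, ∑ j, R (EuclideanSpace.single i 1) (EuclideanSpace.single j 1)
        (EuclideanSpace.single j 1) (EuclideanSpace.single i 1)
      = ∑ i, ∑ j, R (b i) (b j) (b j) (b i) := by
    calc ∑ i, ∑ j, R (EuclideanSpace.single i 1) (EuclideanSpace.single j 1)
          (EuclideanSpace.single j 1) (EuclideanSpace.single i 1)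
        = ∑ i, ∑ j, R (EuclideanSpace.single i 1) (b j) (b j) (EuclideanSpace.single i 1) :=
          Finset.sum_congr rfl fun i _ => h3 _ _
      _ = ∑ j, ∑ i, R (EuclideanSpace.single i 1) (b j) (b j) (EuclideanSpace.single i 1) :=
          Finset.sum_comm
      _ = ∑ j, ∑ i, R (b i) (b j) (b j) (b i) := Finset.sum_congr rfl fun j _ => h2 _
      _ = ∑ i, ∑ j, R (b i) (b j) (b j) (b i) := Finset.sum_comm
  rw [hRic, hScal]
  -- notation
  set g : Fin n → Fin n → ℝ := fun i j => R (b i) (b j) (b j) (b i) with hg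
  have gsymm : ∀ i j, g i j = g j i := fun i j => hpair _ _ _ _
  have gdiag : ∀ i, g i i = 0 := by
    intro i
    have := hanti1 (b i) (b i) (b i) (b i)
    simp only [hg]
    linarith
  -- the pair inequality from PIC1 with λ = 0
  have pair : ∀ a c k : Fin n, a ≠ 0 → c ≠ 0 → k ≠ 0 → a ≠ c → a ≠ k → c ≠ k →
      0 ≤ g a k + g c k := by
    intro a c k ha0 hc0 hk0 hac hak hck
    have hite := orthonormal_iff_ite.mp b.orthonormal
    have hinj : ∀ i j : Fin 4, (![a, c, k, 0]) i = (![a, c, k, 0]) j → i = j := by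
      intro i j h
      fin_cases i <;> fin_cases j <;> revert h <;>
        simp [hac, hak, hck, ha0, hc0, hk0, Ne.symm hac, Ne.symm hak, Ne.symm hck,
          Ne.symm ha0, Ne.symm hc0, Ne.symm hk0]
    have horth : ∀ i j : Fin 4, ⟪(fun m => b (![a, c, k, 0] m)) i, (fun m => b (![a, c, k, 0] m)) j⟫
        = if i = j then (1:ℝ) else 0 := by
      intro i j
      show ⟪b (![a, c, k, 0] i), b (![a, c, k, 0] j)⟫ = _
      rw [hite]
      by_cases h : i = j
      · simp [h]
      · rw [if_neg h, if_neg (fun hh => h (hinj _ _ hh))]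
    have h0 := hPIC1 (fun m => b (![a, c, k, 0] m)) horth 0 ⟨le_refl 0, zero_le_one⟩
    simp only [Matrix.cons_val_zero, Matrix.cons_val_one, Matrix.head_cons,
      Matrix.cons_val_two, Matrix.tail_cons, Matrix.cons_val_three] at h0
    norm_num at h0
    simp only [hg]
    linarith [h0]
  -- the sums
  set S : Finset (Fin n) := Finset.univ.erase 0 with hS
  have hScard : S.card = n - 1 := by simp [hS]
  have hsplit : ∀ f : Fin n → ℝ, ∑ i, f i = f 0 + ∑ i ∈ S, f i := fun f =>
    (Finset.add_sum_erase _ f (Finset.mem_univ 0)).symm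
  -- nonnegativity of the trace-free part
  have hT : 0 ≤ ∑ i ∈ S, ∑ j ∈ S, g i j := by
    refine Finset.sum_nonneg fun k hk => ?_
    have hk0 : k ≠ 0 := Finset.ne_of_mem_erase hk
    -- G = ∑_{j ∈ S} g k j ; show 0 ≤ G
    set t : Finset (Fin n) := S.erase k with ht
    have htcard : t.card = n - 2 := by
      rw [ht, Finset.card_erase_of_mem hk, hScard]
      omega
    have hGt : ∑ j ∈ S, g k j = ∑ j ∈ t, g k j := by
      rw [ht, ← Finset.add_sum_erase _ _ hk, gdiag, zero_add]
    rw [hGt]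
    set G : ℝ := ∑ j ∈ t, g k j with hG
    have hD : 0 ≤ ∑ a ∈ t, ∑ c ∈ t.erase a, (g k a + g k c) := by
      refine Finset.sum_nonneg fun a ha => Finset.sum_nonneg fun c hc => ?_
      have ha0 : a ≠ 0 := Finset.ne_of_mem_erase (Finset.mem_of_mem_erase ha)
      have hak : a ≠ k := Finset.ne_of_mem_erase ha
      have hc0 : c ≠ 0 := Finset.ne_of_mem_erase (Finset.mem_of_mem_erase (Finset.mem_of_mem_erase hc))
      have hck : c ≠ k := Finset.ne_of_mem_erase (Finset.mem_of_mem_erase hc)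
      have hca : c ≠ a := Finset.ne_of_mem_erase hc
      have := pair a c k ha0 hc0 hk0 (Ne.symm hca) hak hck
      have e1 : g k a = g a k := gsymm k a
      have e2 : g k c = g c k := gsymm k c
      linarith
    have hcast1 : ((n - 2 - 1 : ℕ) : ℝ) = (n : ℝ) - 3 := by
      rw [Nat.cast_sub (by omega : 1 ≤ n - 2), Nat.cast_sub (by omega : 2 ≤ n)]
      push_cast; ring
    have hcast2 : ((n - 2 : ℕ) : ℝ) = (n : ℝ) - 2 := by
      rw [Nat.cast_sub (by omega : 2 ≤ n)]; push_cast; ring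
    have hDval : ∑ a ∈ t, ∑ c ∈ t.erase a, (g k a + g k c)
        = (2 * (n : ℝ) - 6) * G := by
      have step : ∀ a ∈ t, ∑ c ∈ t.erase a, (g k a + g k c)
          = ((n : ℝ) - 3) * g k a + (G - g k a) := by
        intro a ha
        rw [Finset.sum_add_distrib, Finset.sum_const, Finset.card_erase_of_mem ha, htcard,
          Finset.sum_erase_eq_sub ha, ← hG, nsmul_eq_mul, hcast1]
      rw [Finset.sum_congr rfl step, Finset.sum_add_distrib, Finset.sum_sub_distrib,
        ← Finset.mul_sum, ← hG, Finset.sum_const, htcard, nsmul_eq_mul, hcast2]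
      ring
    have hpos : (0:ℝ) < 2 * (n : ℝ) - 6 := by
      have : (4:ℝ) ≤ (n:ℝ) := by exact_mod_cast hn
      linarith
    nlinarith [hD, hDval]
  -- final bookkeeping
  have expand : ∑ i, ∑ j, g i j
      = 2 * (∑ j ∈ S, g 0 j) + ∑ i ∈ S, ∑ j ∈ S, g i j := by
    rw [hsplit (fun i => ∑ j, g i j)]
    have h00 : ∑ j, g 0 j = ∑ j ∈ S, g 0 j := by
      rw [hsplit (fun j => g 0 j), gdiag, zero_add]
    rw [h00]
    have hinner : ∀ i ∈ S, ∑ j, g i j = g 0 i + ∑ j ∈ S, g i j := by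
      intro i _
      rw [hsplit (fun j => g i j), gsymm i 0]
    rw [Finset.sum_congr rfl hinner, Finset.sum_add_distrib]
    ring
  have hRicS : ∑ i, R v (b i) (b i) v = ∑ j ∈ S, g 0 j := by
    have : ∀ i, R v (b i) (b i) v = g 0 i := by intro i; simp only [hg, hb0]
    rw [Finset.sum_congr rfl fun i _ => this i]
    rw [hsplit (fun j => g 0 j), gdiag, zero_add]
  rw [hRicS]
  have := expand
  linarith [hT, this.ge, this.le]
end

section
/- Let R be an algebraic curvature tensor on an n-dimensional inner product space (n ≥ 4) satisfying: for all distinct indices i, j, k of an orthonormal basis, R(eᵢ,eⱼ,eⱼ,eᵢ) + R(eᵢ,eₖ,eₖ,eᵢ) ≥ 0. Then for every orthonormal basis {e₁,...,eₙ}, the partial sum Σ_{i,j=1}^{n-1} R(eᵢ,eⱼ,eⱼ,eᵢ) is non-negative. -/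
open Finset

namespace Finset

variable {ι M : Type*} [DecidableEq ι] [AddCommGroup M] [LinearOrder M] [IsOrderedAddMonoid M]
  {s : Finset ι}

/-- At most one term can be negative, and it is compensated by any other term. -/
theorem sum_nonneg_of_pairwise_add_nonneg {f : ι → M} (hs : 1 < #s)
    (h : ∀ j ∈ s, ∀ k ∈ s, j ≠ k → 0 ≤ f j + f k) : 0 ≤ ∑ i ∈ s, f i := by
  by_cases hneg : ∃ m ∈ s, f m < 0
  · obtain ⟨m, hm, hfm⟩ := hneg
    obtain ⟨k, hk, hkm⟩ := exists_mem_ne hs m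
    rw [← add_sum_erase s f hm, ← add_sum_erase _ f (mem_erase.2 ⟨hkm, hk⟩), ← add_assoc]
    refine add_nonneg (h m hm k hk hkm.symm) (sum_nonneg fun i hi => ?_)
    have him : i ≠ m := ne_of_mem_erase (mem_of_mem_erase hi)
    have hi : i ∈ s := mem_of_mem_erase (mem_of_mem_erase hi)
    exact (neg_pos.2 hfm).le.trans (neg_le_iff_add_nonneg'.2 (h m hm i hi him.symm))
  · exact sum_nonneg fun i hi => not_lt.1 fun hfi => hneg ⟨i, hi, hfi⟩

theorem sum_sum_nonneg_of_row_pairwise_add_nonneg {K : ι → ι → M} (hs : 2 < #s)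
    (hdiag : ∀ i ∈ s, K i i = 0)
    (h : ∀ i ∈ s, ∀ j ∈ s, ∀ k ∈ s, i ≠ j → i ≠ k → j ≠ k → 0 ≤ K i j + K i k) :
    0 ≤ ∑ i ∈ s, ∑ j ∈ s, K i j := by
  refine sum_nonneg fun i hi => ?_
  rw [← add_sum_erase s _ hi, hdiag i hi, zero_add]
  refine sum_nonneg_of_pairwise_add_nonneg (by rw [card_erase_of_mem hi]; omega)
    fun j hj k hk hjk => h i hi j (mem_of_mem_erase hj) k (mem_of_mem_erase hk)
      (ne_of_mem_erase hj).symm (ne_of_mem_erase hk).symm hjk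

end Finset

/-- If an algebraic curvature tensor `R` on `ℝⁿ` (`n ≥ 4`) satisfies
`R(eᵢ,eⱼ,eⱼ,eᵢ) + R(eᵢ,eₖ,eₖ,eᵢ) ≥ 0` for all distinct indices of any orthonormal
basis, then for every orthonormal basis the partial sum
`Σ_{i,j=1}^{n-1} R(eᵢ,eⱼ,eⱼ,eᵢ)` (i.e. omitting the last index) is non-negative. -/
theorem stmt_2 (n : ℕ) (hn : 4 ≤ n)
    (R : EuclideanSpace ℝ (Fin n) →ₗ[ℝ] EuclideanSpace ℝ (Fin n) →ₗ[ℝ]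
      EuclideanSpace ℝ (Fin n) →ₗ[ℝ] EuclideanSpace ℝ (Fin n) →ₗ[ℝ] ℝ)
    (hanti1 : ∀ x y z w, R x y z w = - R y x z w)
    (hcond : ∀ b : OrthonormalBasis (Fin n) ℝ (EuclideanSpace ℝ (Fin n)),
      ∀ i j k : Fin n, i ≠ j → i ≠ k → j ≠ k →
        0 ≤ R (b i) (b j) (b j) (b i) + R (b i) (b k) (b k) (b i)) :
    ∀ b : OrthonormalBasis (Fin n) ℝ (EuclideanSpace ℝ (Fin n)),
      0 ≤ ∑ i ∈ Finset.univ.erase (⟨n - 1, by omega⟩ : Fin n),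
            ∑ j ∈ Finset.univ.erase (⟨n - 1, by omega⟩ : Fin n),
              R (b i) (b j) (b j) (b i) := by
  intro b
  have hcard : 2 < #(univ.erase (⟨n - 1, by omega⟩ : Fin n)) := by
    rw [card_erase_of_mem (mem_univ _), card_univ, Fintype.card_fin]
    omega
  have hdiag (i : Fin n) : R (b i) (b i) (b i) (b i) = 0 := by
    linarith [hanti1 (b i) (b i) (b i) (b i)]
  exact sum_sum_nonneg_of_row_pairwise_add_nonneg hcard (fun i _ => hdiag i)
    fun i _ j _ k _ => hcond b i j k
end

section
/- Let k : (0,∞) → [0,∞) be measurable with ∫₀^∞ k(r)/r dr < ∞ and k(r) ≤ Λr² for r ≤ r₀. Suppose for every δ > 0 there is r₀(δ) with k(r) < δ for r > r₀(δ). Then for constants C, n, the quantity t · ∫₀^∞ (rⁿ/t^{n/2}) exp(−r²/(Ct)) (C/(rt)) k(r) dr tends to 0 as t → ∞. -/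
open MeasureTheory

/-- Splitting argument in the gap theorem: if `k ≥ 0` is measurable with
`∫₀^∞ k(r)/r dr < ∞`, `k(r) ≤ Λr²` for `r ≤ r₀`, and `k(r) → 0` as `r → ∞`
(in the sense that for every `δ > 0`, `k < δ` beyond some radius), then
`t · ∫₀^∞ (rⁿ/t^{n/2}) e^{−r²/(Ct)} (C/(rt)) k(r) dr → 0` as `t → ∞`. -/
theorem stmt_17 (C : ℝ) (hC : 0 < C) (n : ℕ) (hn : 1 ≤ n)
    (k : ℝ → ℝ) (hk0 : ∀ r, 0 ≤ k r) (hkm : Measurable k)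
    (hint : IntegrableOn (fun r => k r / r) (Set.Ioi 0))
    (Λ r₀ : ℝ) (hΛ : 0 < Λ) (hr₀ : 0 < r₀)
    (hnear : ∀ r, 0 < r → r ≤ r₀ → k r ≤ Λ * r ^ 2)
    (hfar : ∀ δ : ℝ, 0 < δ → ∃ r₁ : ℝ, 0 < r₁ ∧ ∀ r, r₁ < r → k r < δ) :
    Filter.Tendsto (fun t : ℝ =>
        t * ∫ r in Set.Ioi (0 : ℝ),
          (r ^ n / t ^ ((n : ℝ) / 2)) * Real.exp (-r ^ 2 / (C * t)) * (C / (r * t)) * k r)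
      Filter.atTop (nhds 0) := by
  -- uniform bound for g x = x^n exp(-x²/C) on x ≥ 0
  set M : ℝ := 1 + n.factorial * C ^ n with hM
  have hgM : ∀ x : ℝ, 0 ≤ x → x ^ n * Real.exp (-x ^ 2 / C) ≤ M := by
    intro x hx
    have hfac : (0:ℝ) ≤ (n.factorial : ℝ) * C ^ n := by positivity
    rcases le_total x 1 with h1 | h1
    · have hxn : x ^ n ≤ 1 := pow_le_one₀ hx h1
      have hexp : Real.exp (-x ^ 2 / C) ≤ 1 := by
        rw [Real.exp_le_one_iff, neg_div]
        have : (0:ℝ) ≤ x ^ 2 / C := by positivity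
        linarith
      nlinarith [Real.exp_nonneg (-x ^ 2 / C), pow_nonneg hx n]
    · have hx0 : 0 < x := lt_of_lt_of_le one_pos h1
      have hy : (0:ℝ) ≤ x ^ 2 / C := by positivity
      have hterm : (x ^ 2 / C) ^ n / n.factorial ≤ Real.exp (x ^ 2 / C) := by
        calc (x ^ 2 / C) ^ n / n.factorial
            ≤ ∑ i ∈ Finset.range (n + 1), (x ^ 2 / C) ^ i / i.factorial := by
              apply Finset.single_le_sum (f := fun i => (x ^ 2 / C) ^ i / (i.factorial : ℝ))
                (fun i _ => by positivity) (Finset.self_mem_range_succ n)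
          _ ≤ Real.exp (x ^ 2 / C) := Real.sum_le_exp_of_nonneg hy _
      have hpos : (0:ℝ) < (x ^ 2 / C) ^ n / n.factorial := by positivity
      have hexp : Real.exp (-x ^ 2 / C) ≤ n.factorial / (x ^ 2 / C) ^ n := by
        rw [neg_div, Real.exp_neg]
        calc (Real.exp (x ^ 2 / C))⁻¹ ≤ ((x ^ 2 / C) ^ n / n.factorial)⁻¹ :=
              inv_anti₀ hpos hterm
          _ = n.factorial / (x ^ 2 / C) ^ n := by
              rw [inv_div]
      calc x ^ n * Real.exp (-x ^ 2 / C) ≤ x ^ n * (n.factorial / (x ^ 2 / C) ^ n) := by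
            exact mul_le_mul_of_nonneg_left hexp (pow_nonneg hx n)
        _ = n.factorial * C ^ n / x ^ n := by
            rw [div_pow]
            field_simp
            ring
        _ ≤ n.factorial * C ^ n := by
            apply div_le_self hfac (one_le_pow₀ h1)
        _ ≤ M := by rw [hM]; linarith
  -- key identity
  have hid : ∀ t r : ℝ, 0 < t → 0 < r →
      t * ((r ^ n / t ^ ((n : ℝ) / 2)) * Real.exp (-r ^ 2 / (C * t)) * (C / (r * t)) * k r)
        = (C * (k r / r)) * ((r * t ^ (-(1:ℝ)/2)) ^ n
            * Real.exp (-(r * t ^ (-(1:ℝ)/2)) ^ 2 / C)) := by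
    intro t r ht hr
    have hP : 0 < t ^ ((n:ℝ)/2) := Real.rpow_pos_of_pos ht _
    have hun : (t ^ (-(1:ℝ)/2)) ^ n = (t ^ ((n:ℝ)/2))⁻¹ := by
      rw [← Real.rpow_natCast (t ^ (-(1:ℝ)/2)) n, ← Real.rpow_mul ht.le,
        show (-(1:ℝ)/2 * n) = -((n:ℝ)/2) by ring, Real.rpow_neg ht.le]
    have hu2 : (t ^ (-(1:ℝ)/2)) ^ 2 = t⁻¹ := by
      rw [← Real.rpow_natCast (t ^ (-(1:ℝ)/2)) 2, ← Real.rpow_mul ht.le]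
      norm_num [Real.rpow_neg_one]
    rw [mul_pow, mul_pow, hun, hu2]
    have hE : -(r ^ 2 * t⁻¹) / C = -r ^ 2 / (C * t) := by
      field_simp
    rw [hE]
    field_simp
  -- dominated convergence
  have hmeas : ∀ᶠ t in Filter.atTop, AEStronglyMeasurable
      (fun r : ℝ => t * ((r ^ n / t ^ ((n : ℝ) / 2)) * Real.exp (-r ^ 2 / (C * t))
        * (C / (r * t)) * k r)) (volume.restrict (Set.Ioi 0)) := by
    filter_upwards with t
    apply Measurable.aestronglyMeasurable
    fun_prop
  have hbound : ∀ᶠ t in Filter.atTop, ∀ᵐ r ∂(volume.restrict (Set.Ioi (0:ℝ))),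
      ‖t * ((r ^ n / t ^ ((n : ℝ) / 2)) * Real.exp (-r ^ 2 / (C * t))
        * (C / (r * t)) * k r)‖ ≤ M * C * (k r / r) := by
    filter_upwards [Filter.eventually_ge_atTop (1:ℝ)] with t ht
    filter_upwards [ae_restrict_mem measurableSet_Ioi] with r hr
    have ht0 : (0:ℝ) < t := lt_of_lt_of_le one_pos ht
    have hr0 : (0:ℝ) < r := hr
    rw [hid t r ht0 hr0]
    have hx0 : 0 ≤ r * t ^ (-(1:ℝ)/2) :=
      mul_nonneg hr0.le (Real.rpow_nonneg ht0.le _)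
    have hnn : 0 ≤ (C * (k r / r)) * ((r * t ^ (-(1:ℝ)/2)) ^ n
        * Real.exp (-(r * t ^ (-(1:ℝ)/2)) ^ 2 / C)) := by
      apply mul_nonneg (mul_nonneg hC.le (div_nonneg (hk0 r) hr0.le))
      exact mul_nonneg (pow_nonneg hx0 n) (Real.exp_nonneg _)
    rw [Real.norm_eq_abs, abs_of_nonneg hnn]
    calc (C * (k r / r)) * ((r * t ^ (-(1:ℝ)/2)) ^ n
          * Real.exp (-(r * t ^ (-(1:ℝ)/2)) ^ 2 / C))
        ≤ (C * (k r / r)) * M := by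
          exact mul_le_mul_of_nonneg_left (hgM _ hx0)
            (mul_nonneg hC.le (div_nonneg (hk0 r) hr0.le))
      _ = M * C * (k r / r) := by ring
  have hbint : Integrable (fun r : ℝ => M * C * (k r / r))
      (volume.restrict (Set.Ioi (0:ℝ))) := by
    simpa [mul_assoc] using hint.const_mul (M * C)
  have hlim : ∀ᵐ r ∂(volume.restrict (Set.Ioi (0:ℝ))),
      Filter.Tendsto (fun t : ℝ => t * ((r ^ n / t ^ ((n : ℝ) / 2))
        * Real.exp (-r ^ 2 / (C * t)) * (C / (r * t)) * k r))
        Filter.atTop (nhds ((fun _ : ℝ => (0:ℝ)) r)) := by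
    filter_upwards [ae_restrict_mem measurableSet_Ioi] with r hr
    have hr0 : (0:ℝ) < r := hr
    have h1 : Filter.Tendsto (fun t : ℝ => r * t ^ (-(1:ℝ)/2)) Filter.atTop (nhds 0) := by
      have := (tendsto_rpow_neg_atTop (by norm_num : (0:ℝ) < 1/2)).const_mul r
      simpa [neg_div] using this
    have hcont : Continuous fun x : ℝ => x ^ n * Real.exp (-x ^ 2 / C) := by
      fun_prop
    have h2 : Filter.Tendsto (fun x : ℝ => x ^ n * Real.exp (-x ^ 2 / C))
        (nhds 0) (nhds 0) := by
      have := hcont.tendsto 0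
      simpa [zero_pow (by omega : n ≠ 0)] using this
    have h3 := ((h2.comp h1).const_mul (C * (k r / r)))
    rw [mul_zero] at h3
    apply h3.congr'
    filter_upwards [Filter.eventually_gt_atTop (0:ℝ)] with t ht
    exact (hid t r ht hr0).symm
  have final := MeasureTheory.tendsto_integral_filter_of_dominated_convergence
    (μ := volume.restrict (Set.Ioi (0:ℝ)))
    (F := fun t r => t * ((r ^ n / t ^ ((n : ℝ) / 2)) * Real.exp (-r ^ 2 / (C * t))
      * (C / (r * t)) * k r))
    (f := fun _ => (0:ℝ))
    (fun r => M * C * (k r / r)) hmeas hbound hbint hlim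
  simp only [integral_zero] at final
  have heq : (fun t : ℝ => t * ∫ r in Set.Ioi (0 : ℝ),
      (r ^ n / t ^ ((n : ℝ) / 2)) * Real.exp (-r ^ 2 / (C * t)) * (C / (r * t)) * k r)
      = fun t : ℝ => ∫ r in Set.Ioi (0:ℝ),
        t * ((r ^ n / t ^ ((n : ℝ) / 2)) * Real.exp (-r ^ 2 / (C * t)) * (C / (r * t)) * k r) := by
    funext t
    rw [MeasureTheory.integral_const_mul]
  rw [heq]
  exact final
end
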